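/- Let G be a quantitative reachability game with penalty function p and vertex set V, let X be its extended game X_CP or X_PC, let v ∈ V, let (x,y) ∈ ℕ², and let ≲ be either the componentwise order ≤_C or the lexicographic order ≤_L on (ℕ ∪ {∞})². If there exists a strategy σ₁ of Player 1 from v^X in X such that Cost^X(Out(σ₁,σ₂,v^X)) ≲ (x,y) for every strategy σ₂ of Player 2, then there exists a strategy σ₁' of Player 1 from v^X such that for every strategy σ₂ of Player 2: Cost^X(Out(σ₁',σ₂,v^X)) ≲ (x,y) and the play Out(σ₁',σ₂,v^X) visits the target set of X within at most 2·|V| steps (i.e., LengthF(Out(σ₁',σ₂,v^X)) ≤ 2·|V|, where |V| is the number of vertices of the original game G). -/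

import Mathlib

open Classical

/-- Cost profiles: `d`-tuples over `ℕ ∪ {∞}`. -/
abbrev CostP (d : ℕ) := Fin d → ℕ∞

/-- The componentwise order `≤_C` on `(ℕ ∪ {∞})^d`. -/
def leC {d : ℕ} (x y : CostP d) : Prop := x ≤ y

/-- The strict lexicographic order `<_L` on `(ℕ ∪ {∞})^d`. -/
def ltL {d : ℕ} (x y : CostP d) : Prop :=
  ∃ i, (∀ j, j < i → x j = y j) ∧ x i < y i

/-- The lexicographic order `≤_L` on `(ℕ ∪ {∞})^d`. -/
def leL {d : ℕ} (x y : CostP d) : Prop := x = y ∨ ltL x y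

/-- Minimal elements of `X` with respect to an order `le`. -/
def minimalSet {α : Type*} (le : α → α → Prop) (X : Set α) : Set α :=
  { x | x ∈ X ∧ ∀ y ∈ X, le y x → y = x }

/-- Upward closure of `X` with respect to an order `le`. -/
def upSet {α : Type*} (le : α → α → Prop) (X : Set α) : Set α :=
  { z | ∃ x ∈ X, le x z }

/-- Translation of a set of cost profiles by (the cast of) a tuple `c ∈ ℕ^d`. -/
def addW {d : ℕ} (X : Set (CostP d)) (c : Fin d → ℕ) : Set (CostP d) :=
  { z | ∃ x ∈ X, z = x + fun i => (c i : ℕ∞) }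

/-- A `d`-weighted reachability game: a finite directed graph whose vertices are
partitioned into Player 1's vertices `V1` and Player 2's vertices (the complement),
an edge relation `E` such that every vertex has a successor, a `d`-dimensional
weight function `w` on edges, and a target set `F`. -/
structure MWGame (V : Type*) (d : ℕ) where
  V1 : Set V
  E : V → V → Prop
  succ_nonempty : ∀ v, ∃ v', E v v'
  w : V → V → Fin d → ℕ
  F : Set V

namespace MWGame

variable {V : Type*} {d : ℕ}

/-- Strategies of Player 1: a choice of successor for every history
(represented as the pair (strict past, current vertex)), valid at Player 1's vertices. -/
def Strat1 (G : MWGame V d) :=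
  { σ : List V → V → V // ∀ h u, u ∈ G.V1 → G.E u (σ h u) }

/-- Strategies of Player 2. -/
def Strat2 (G : MWGame V d) :=
  { σ : List V → V → V // ∀ h u, u ∉ G.V1 → G.E u (σ h u) }

/-- The pair (strict past, current vertex) after `n` steps of the play consistent
with `σ₁` and `σ₂` from `v`. -/
noncomputable def outAux (G : MWGame V d) (σ₁ : G.Strat1) (σ₂ : G.Strat2) (v : V) :
    ℕ → List V × V
  | 0 => ([], v)
  | n + 1 =>
    let q := G.outAux σ₁ σ₂ v n
    (q.1 ++ [q.2], if q.2 ∈ G.V1 then σ₁.1 q.1 q.2 else σ₂.1 q.1 q.2)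

/-- `Out(σ₁,σ₂,v)`: the unique play from `v` consistent with `σ₁` and `σ₂`. -/
noncomputable def out (G : MWGame V d) (σ₁ : G.Strat1) (σ₂ : G.Strat2) (v : V) (n : ℕ) : V :=
  (G.outAux σ₁ σ₂ v n).2

/-- The cost profile of a play: the componentwise sum of weights up to the first
visit of the target set, and `(∞,…,∞)` if the target set is never visited. -/
noncomputable def cost (G : MWGame V d) (ρ : ℕ → V) : CostP d :=
  if h : ∃ ℓ, ρ ℓ ∈ G.F then
    fun i => ∑ n ∈ Finset.range (Nat.find h), (G.w (ρ n) (ρ (n + 1)) i : ℕ∞)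
  else ⊤

/-- `Ensure^k(v)`: cost profiles that Player 1 can ensure from `v` within `k` steps. -/
def EnsureK (G : MWGame V d) (le : CostP d → CostP d → Prop) (k : ℕ) (v : V) :
    Set (CostP d) :=
  { x | ∃ σ₁ : G.Strat1, ∀ σ₂ : G.Strat2,
      le (G.cost (G.out σ₁ σ₂ v)) x ∧
      ∀ h : (∃ ℓ, G.out σ₁ σ₂ v ℓ ∈ G.F), Nat.find h ≤ k }

/-- `Ensure(v)`: cost profiles that Player 1 can ensure from `v`. -/
def Ensure (G : MWGame V d) (le : CostP d → CostP d → Prop) (v : V) : Set (CostP d) :=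
  { x | ∃ σ₁ : G.Strat1, ∀ σ₂ : G.Strat2, le (G.cost (G.out σ₁ σ₂ v)) x }

/-- The sets `Iᵏ(v)` computed by the fixpoint algorithm, relative to the order `le`. -/
noncomputable def Iset (G : MWGame V d) (le : CostP d → CostP d → Prop) :
    ℕ → V → Set (CostP d)
  | 0, v => if v ∈ G.F then {0} else {⊤}
  | k + 1, v =>
    if v ∈ G.F then {0}
    else if v ∈ G.V1 then
      minimalSet le (⋃ v' ∈ { u | G.E v u }, addW (upSet le (G.Iset le k v')) (G.w v v'))
    else
      minimalSet le (⋂ v' ∈ { u | G.E v u }, addW (upSet le (G.Iset le k v')) (G.w v v'))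

end MWGame
/-- A quantitative reachability game equipped with a penalty function: a finite directed
graph with Player 1's vertices `V1`, edge relation `E` (every vertex has a successor),
a cost `c` and a penalty `p` on every edge, and a target set `F`. -/
structure QRGame (V : Type*) where
  V1 : Set V
  E : V → V → Prop
  succ_nonempty : ∀ v, ∃ v', E v v'
  c : V → V → ℕ
  F : Set V
  p : V → V → ℕ

namespace QRGame

variable {V : Type*}

/-- Multi-strategies of Player 1: for every history (strict past, current vertex) a
nonempty set of successors of the current vertex, at Player 1's vertices. -/
def MultiStrat (G : QRGame V) :=
  { θ : List V → V → Set V //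
      ∀ h u, u ∈ G.V1 → (θ h u).Nonempty ∧ ∀ z ∈ θ h u, G.E u z }

/-- The set of plays from `v` consistent with the multi-strategy `θ` (and with an
arbitrary behaviour of Player 2). -/
def consistent (G : QRGame V) (θ : G.MultiStrat) (v : V) : Set (ℕ → V) :=
  { ρ | ρ 0 = v ∧ ∀ n,
      (ρ n ∈ G.V1 → ρ (n + 1) ∈ θ.1 ((List.range n).map ρ) (ρ n)) ∧
      (ρ n ∉ G.V1 → G.E (ρ n) (ρ (n + 1))) }

/-- The cost of a play: the sum of the edge costs up to the first visit of the target
set, and `∞` if the target set is never visited. -/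
noncomputable def qcost (G : QRGame V) (ρ : ℕ → V) : ℕ∞ :=
  if h : ∃ l, ρ l ∈ G.F then
    ∑ n ∈ Finset.range (Nat.find h), (G.c (ρ n) (ρ (n + 1)) : ℕ∞)
  else ⊤

/-- `wCost(θ,v)`: the worst cost of a play consistent with `θ` from `v`. -/
noncomputable def wCost (G : QRGame V) (θ : G.MultiStrat) (v : V) : ℕ∞ :=
  sSup (G.qcost '' G.consistent θ v)

/-- The penalty of Player 1 w.r.t. `θ` along a play: the (possibly infinite) sum, over
all positions owned by Player 1, of the penalties of the edges blocked by `θ` there. -/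
noncomputable def penAlong [Fintype V] (G : QRGame V) (θ : G.MultiStrat) (ρ : ℕ → V) : ℕ∞ :=
  ∑' n : ℕ,
    if ρ n ∈ G.V1 then
      ∑ u : V, (if G.E (ρ n) u ∧ u ∉ θ.1 ((List.range n).map ρ) (ρ n)
                then (G.p (ρ n) u : ℕ∞) else 0)
    else 0

/-- `Pen(θ,v)`: the worst penalty of a play consistent with `θ` from `v`. -/
noncomputable def pen [Fintype V] (G : QRGame V) (θ : G.MultiStrat) (v : V) : ℕ∞ :=
  sSup ((G.penAlong θ) '' G.consistent θ v)

/-- Vertices of the extended game: a copy `Sum.inl v` of every vertex `v` of the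
original game, together with a vertex `Sum.inr (v, A)` for every Player 1 vertex `v`
and every nonempty set `A` of successors of `v` (a choice of Player 1 at `v`). -/
def XV (G : QRGame V) : Type _ :=
  V ⊕ { q : V × Set V // q.1 ∈ G.V1 ∧ q.2.Nonempty ∧ ∀ u ∈ q.2, G.E q.1 u }

/-- Pairs `(x,y)` as weight tuples, with the two components swapped when `swap` is true
(`swap = false` gives the `CP` extended game, `swap = true` the `PC` one). -/
def mkW (swap : Bool) (x y : ℕ) : Fin 2 → ℕ :=
  fun i => if (i : ℕ) = 0 then (if swap then y else x) else (if swap then x else y)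

/-- The extended game `X_CP` (for `swap = false`) or `X_PC` (for `swap = true`) of a
quantitative reachability game with penalties, as a 2-weighted reachability game. -/
noncomputable def extGame [Fintype V] (G : QRGame V) (swap : Bool) : MWGame (G.XV) 2 where
  V1 := { z | ∃ v ∈ G.V1, z = Sum.inl v }
  E := fun z z' =>
    match z, z' with
    | Sum.inl v, Sum.inl v' => v ∉ G.V1 ∧ G.E v v'
    | Sum.inl v, Sum.inr q => q.1.1 = v
    | Sum.inr q, Sum.inl u => u ∈ q.1.2
    | Sum.inr _, Sum.inr _ => False
  succ_nonempty := by
    rintro (v | q)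
    · by_cases hv : v ∈ G.V1
      · exact ⟨Sum.inr ⟨(v, { u | G.E v u }), hv, G.succ_nonempty v, fun u hu => hu⟩, rfl⟩
      · obtain ⟨v', hv'⟩ := G.succ_nonempty v
        exact ⟨Sum.inl v', hv, hv'⟩
    · obtain ⟨u, hu⟩ := q.2.2.1
      exact ⟨Sum.inl u, hu⟩
  w := fun z z' =>
    match z, z' with
    | Sum.inl v, Sum.inl v' => mkW swap (G.c v v') 0
    | Sum.inl _, Sum.inr q =>
        mkW swap 0 (∑ u : V, if G.E q.1.1 u ∧ u ∉ q.1.2 then G.p q.1.1 u else 0)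
    | Sum.inr q, Sum.inl u => mkW swap (G.c q.1.1 u) 0
    | Sum.inr _, Sum.inr _ => fun _ => 0
  F := { z | ∃ v ∈ G.F, z = Sum.inl v }

end QRGame

/-- The pair `(x, y)` as a 2-dimensional cost profile. -/
def pair2 (x y : ℕ∞) : CostP 2 := fun i => if (i : ℕ) = 0 then x else y

/-!
Player 1 keeps playing the winning strategy `σ₁`, but after a *virtual* history instead of the
real one: a `σ₁`-consistent history that ends at the current vertex, costs at least as much as
the real history, and cannot be prolonged by a `σ₁`-consistent loop back to its last vertex that
avoids the target. Such a maximal prolongation exists because an infinite chain of prolongations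
would converge to a `σ₁`-consistent play that never reaches the target, and whose cost `⊤` is
not ensured. As weights are nonnegative, the cost of the real play is then dominated by the cost
of a `σ₁`-consistent play, so it stays in the downward closed set ensured by `σ₁`; and a vertex
repeated before the target would close a forbidden loop. In the extended game every vertex
`v^X_A` is entered from `v^X`, so a play without repetitions reaches the target within `2|V|`
steps.
-/

lemma leL_iff_toLex_le {d : ℕ} {x y : CostP d} : leL x y ↔ toLex x ≤ toLex y := by
  rw [le_iff_eq_or_lt, toLex_inj]
  rfl

lemma isLowerSet_setOf_le {d : ℕ} {le : CostP d → CostP d → Prop} (hle : le = leC ∨ le = leL)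
    (t : CostP d) : IsLowerSet {c | le c t} := by
  rcases hle with rfl | rfl
  · exact isLowerSet_Iic t
  · intro a b hba ha
    exact leL_iff_toLex_le.2 ((Pi.toLex_monotone hba).trans (leL_iff_toLex_le.1 ha))

lemma eq_top_of_top_le {d : ℕ} {le : CostP d → CostP d → Prop} (hle : le = leC ∨ le = leL)
    {t : CostP d} (h : le ⊤ t) : t = ⊤ := by
  rcases hle with rfl | rfl
  · exact top_le_iff.1 h
  · exact toLex.injective (le_antisymm (Pi.toLex_monotone le_top) (leL_iff_toLex_le.1 h))

lemma pair2_ne_top (x y : ℕ) : pair2 x y ≠ ⊤ := fun h =>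
  ENat.natCast_ne_top x (by simpa [pair2] using congrFun h 0)

/-- Only `path 0, …, path len` matter. -/
structure PlayPrefix (W : Type*) where
  path : ℕ → W
  len : ℕ

namespace PlayPrefix

variable {W : Type*}

def last (p : PlayPrefix W) : W := p.path p.len

def past (p : PlayPrefix W) : List W := (List.range p.len).map p.path

def snoc (p : PlayPrefix W) (u : W) : PlayPrefix W :=
  ⟨fun i => if i ≤ p.len then p.path i else u, p.len + 1⟩

instance : Preorder (PlayPrefix W) where
  le p q := p.len ≤ q.len ∧ ∀ i ≤ p.len, q.path i = p.path i
  le_refl _ := ⟨le_rfl, fun _ _ => rfl⟩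
  le_trans _ _ _ hpq hqr :=
    ⟨hpq.1.trans hqr.1, fun i hi => (hqr.2 i (hi.trans hpq.1)).trans (hpq.2 i hi)⟩

lemma _root_.LE.le.path_eq {p q : PlayPrefix W} (h : p ≤ q) {i : ℕ} (hi : i ≤ p.len) :
    q.path i = p.path i :=
  h.2 i hi

@[simp] lemma len_snoc (p : PlayPrefix W) (u : W) : (p.snoc u).len = p.len + 1 := rfl

lemma path_snoc_succ (p : PlayPrefix W) (u : W) : (p.snoc u).path (p.len + 1) = u :=
  if_neg (Nat.not_succ_le_self p.len)

@[simp] lemma last_snoc (p : PlayPrefix W) (u : W) : (p.snoc u).last = u := path_snoc_succ p u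

lemma le_snoc (p : PlayPrefix W) (u : W) : p ≤ p.snoc u :=
  ⟨Nat.le_succ _, fun _ hi => if_pos hi⟩

end PlayPrefix

namespace MWGame

variable {W : Type*} {d : ℕ} (X : MWGame W d)

lemma outAux_fst (σ₁ : X.Strat1) (σ₂ : X.Strat2) (s : W) (n : ℕ) :
    (X.outAux σ₁ σ₂ s n).1 = (List.range n).map (X.out σ₁ σ₂ s) := by
  induction n with
  | zero => rfl
  | succ n ih =>
    simp only [outAux, List.range_succ, List.map_append, List.map_singleton, ih]
    rfl

lemma out_succ (σ₁ : X.Strat1) (σ₂ : X.Strat2) (s : W) (n : ℕ) :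
    X.out σ₁ σ₂ s (n + 1) =
      if X.out σ₁ σ₂ s n ∈ X.V1 then σ₁.1 ((List.range n).map (X.out σ₁ σ₂ s)) (X.out σ₁ σ₂ s n)
      else σ₂.1 ((List.range n).map (X.out σ₁ σ₂ s)) (X.out σ₁ σ₂ s n) := by
  rw [out, outAux, outAux_fst]
  rfl

def IsMove (σ₁ : X.Strat1) (past : List W) (v u : W) : Prop :=
  X.E v u ∧ (v ∈ X.V1 → u = σ₁.1 past v)

lemma isMove_out (σ₁ : X.Strat1) (σ₂ : X.Strat2) (s : W) (n : ℕ) :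
    X.IsMove σ₁ ((List.range n).map (X.out σ₁ σ₂ s)) (X.out σ₁ σ₂ s n)
      (X.out σ₁ σ₂ s (n + 1)) := by
  rw [out_succ]
  by_cases hv : X.out σ₁ σ₂ s n ∈ X.V1
  · rw [if_pos hv]
    exact ⟨σ₁.2 _ _ hv, fun _ => rfl⟩
  · rw [if_neg hv]
    exact ⟨σ₂.2 _ _ hv, fun h => absurd h hv⟩

noncomputable def follow (ρ : ℕ → W) : X.Strat2 :=
  ⟨fun past v => if X.E v (ρ (past.length + 1)) then ρ (past.length + 1)
      else (X.succ_nonempty v).choose,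
    fun _ v _ => by
      dsimp only
      split_ifs with h
      exacts [h, (X.succ_nonempty v).choose_spec]⟩

lemma out_follow {σ₁ : X.Strat1} {s : W} {ρ : ℕ → W} {n : ℕ} (h0 : ρ 0 = s)
    (hmove : ∀ i < n, X.IsMove σ₁ ((List.range i).map ρ) (ρ i) (ρ (i + 1))) :
    ∀ k ≤ n, X.out σ₁ (X.follow ρ) s k = ρ k := by
  intro k hk
  induction k using Nat.strong_induction_on with
  | _ k ih =>
    cases k with
    | zero => exact h0.symm
    | succ k =>
      have hpast : (List.range k).map (X.out σ₁ (X.follow ρ) s) = (List.range k).map ρ :=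
        List.map_congr_left fun j hj => by
          rw [List.mem_range] at hj
          exact ih j (by omega) (by omega)
      obtain ⟨hE, hσ₁⟩ := hmove k (by omega)
      rw [out_succ, ih k (by omega) (by omega), hpast]
      split_ifs with hv
      · exact (hσ₁ hv).symm
      · simp [follow, hE]

def weightSum (ρ : ℕ → W) (n : ℕ) : CostP d :=
  fun j => ∑ i ∈ Finset.range n, (X.w (ρ i) (ρ (i + 1)) j : ℕ∞)

lemma cost_eq_weightSum {ρ : ℕ → W} {n : ℕ} (hn : ρ n ∈ X.F) (hlt : ∀ i < n, ρ i ∉ X.F) :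
    X.cost ρ = X.weightSum ρ n := by
  have h : ∃ l, ρ l ∈ X.F := ⟨n, hn⟩
  rw [cost, dif_pos h, (Nat.find_eq_iff h).2 ⟨hn, hlt⟩]
  rfl

lemma cost_eq_top {ρ : ℕ → W} (h : ∀ n, ρ n ∉ X.F) : X.cost ρ = ⊤ := by
  rw [cost, dif_neg (not_exists.2 h)]

lemma weightSum_congr {ρ ρ' : ℕ → W} {n : ℕ} (h : ∀ i ≤ n, ρ i = ρ' i) :
    X.weightSum ρ n = X.weightSum ρ' n := by
  funext j
  refine Finset.sum_congr rfl fun i hi => ?_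
  rw [Finset.mem_range] at hi
  rw [h i hi.le, h (i + 1) hi]

lemma weightSum_succ (ρ : ℕ → W) (n : ℕ) :
    X.weightSum ρ (n + 1) = X.weightSum ρ n + fun j => (X.w (ρ n) (ρ (n + 1)) j : ℕ∞) := by
  funext j
  exact Finset.sum_range_succ _ _

lemma weightSum_snoc (p : PlayPrefix W) (u : W) :
    X.weightSum (p.snoc u).path (p.snoc u).len =
      X.weightSum p.path p.len + fun j => (X.w p.last u j : ℕ∞) := by
  rw [PlayPrefix.len_snoc, weightSum_succ, PlayPrefix.path_snoc_succ,
    (p.le_snoc u).path_eq le_rfl,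
    X.weightSum_congr fun i hi => (p.le_snoc u).path_eq hi]
  rfl

lemma weightSum_mono {p q : PlayPrefix W} (h : p ≤ q) :
    X.weightSum p.path p.len ≤ X.weightSum q.path q.len := fun j =>
  calc X.weightSum p.path p.len j = X.weightSum q.path p.len j := by
        rw [X.weightSum_congr fun i hi => (h.path_eq hi).symm]
    _ ≤ X.weightSum q.path q.len j :=
        Finset.sum_le_sum_of_subset (Finset.range_subset_range.2 h.1)

section Shortcut

variable (σ₁ : X.Strat1) (s : W)

def IsRun (p : PlayPrefix W) : Prop :=
  p.path 0 = s ∧ ∀ i < p.len,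
    X.IsMove σ₁ ((List.range i).map p.path) (p.path i) (p.path (i + 1)) ∧ p.path i ∉ X.F

def LiveExt (q p : PlayPrefix W) : Prop :=
  p ≤ q ∧ p.len < q.len ∧ X.IsRun σ₁ s q ∧ q.last ∉ X.F

def LoopExt (q p : PlayPrefix W) : Prop :=
  X.LiveExt σ₁ s q p ∧ q.last = p.last

noncomputable def maxLoopExt (p : PlayPrefix W) : PlayPrefix W :=
  if h : ∃ q, (q = p ∨ X.LoopExt σ₁ s q p) ∧ ∀ q', ¬ X.LoopExt σ₁ s q' q then h.choose else p

noncomputable def virtualHist (l : List W) : PlayPrefix W :=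
  l.tail.foldl (fun p u => X.maxLoopExt σ₁ s (p.snoc u)) (X.maxLoopExt σ₁ s ⟨fun _ => s, 0⟩)

noncomputable def shortcut : X.Strat1 :=
  ⟨fun past u => σ₁.1 (X.virtualHist σ₁ s (past ++ [u])).past u, fun _ _ hu => σ₁.2 _ _ hu⟩

variable {X σ₁ s}

lemma IsRun.snoc {p : PlayPrefix W} {u : W} (hp : X.IsRun σ₁ s p) (hF : p.last ∉ X.F)
    (hu : X.IsMove σ₁ p.past p.last u) :
    X.IsRun σ₁ s (p.snoc u) := by
  have hagree : ∀ i ≤ p.len, (p.snoc u).path i = p.path i := fun _ => (p.le_snoc u).path_eq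
  refine ⟨(hagree 0 (Nat.zero_le _)).trans hp.1, fun i hi => ?_⟩
  rw [PlayPrefix.len_snoc, Nat.lt_succ_iff] at hi
  rw [List.map_congr_left fun j hj => hagree j (by rw [List.mem_range] at hj; omega),
    hagree i hi]
  rcases hi.lt_or_eq with hi | rfl
  · rw [hagree (i + 1) hi]
    exact hp.2 i hi
  · rw [PlayPrefix.path_snoc_succ]
    exact ⟨hu, hF⟩

lemma LoopExt.trans {p q r : PlayPrefix W} (hrq : X.LoopExt σ₁ s r q)
    (hqp : q = p ∨ X.LoopExt σ₁ s q p) : X.LoopExt σ₁ s r p := by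
  rcases hqp with rfl | ⟨⟨hpq, hlen, -⟩, hlast⟩
  · exact hrq
  · obtain ⟨⟨hqr, hlen', hrun, hF⟩, hlast'⟩ := hrq
    exact ⟨⟨hpq.trans hqr, hlen.trans hlen', hrun, hF⟩, hlast'.trans hlast⟩

lemma maxLoopExt_eq_or_loopExt (p : PlayPrefix W) :
    X.maxLoopExt σ₁ s p = p ∨ X.LoopExt σ₁ s (X.maxLoopExt σ₁ s p) p := by
  unfold maxLoopExt
  split_ifs with h
  · exact h.choose_spec.1
  · exact Or.inl rfl

lemma le_maxLoopExt (p : PlayPrefix W) : p ≤ X.maxLoopExt σ₁ s p :=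
  (maxLoopExt_eq_or_loopExt p).elim (fun h => h.symm ▸ le_rfl) (fun h => h.1.1)

lemma last_maxLoopExt (p : PlayPrefix W) : (X.maxLoopExt σ₁ s p).last = p.last :=
  (maxLoopExt_eq_or_loopExt p).elim (fun h => by rw [h]) (fun h => h.2)

lemma IsRun.maxLoopExt {p : PlayPrefix W} (hp : X.IsRun σ₁ s p) :
    X.IsRun σ₁ s (X.maxLoopExt σ₁ s p) :=
  (maxLoopExt_eq_or_loopExt p).elim (fun h => by rw [h]; exact hp) (fun h => h.1.2.2.1)

section Winning

variable {S : Set (CostP d)}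

lemma weightSum_mem_of_isRun (hwin : ∀ σ₂ : X.Strat2, X.cost (X.out σ₁ σ₂ s) ∈ S)
    {p : PlayPrefix W} (hp : X.IsRun σ₁ s p) (hF : p.last ∈ X.F) :
    X.weightSum p.path p.len ∈ S := by
  have hout := X.out_follow hp.1 fun i hi => (hp.2 i hi).1
  have hcost : X.cost (X.out σ₁ (X.follow p.path) s) = X.weightSum p.path p.len := by
    rw [X.cost_eq_weightSum (hout _ le_rfl ▸ hF) fun i hi => hout i hi.le ▸ (hp.2 i hi).2,
      X.weightSum_congr hout]
  exact hcost ▸ hwin _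

lemma exists_mem_F_of_isMove (hwin : ∀ σ₂ : X.Strat2, X.cost (X.out σ₁ σ₂ s) ∈ S)
    (htop : ⊤ ∉ S) {ρ : ℕ → W} (h0 : ρ 0 = s)
    (hmove : ∀ i, X.IsMove σ₁ ((List.range i).map ρ) (ρ i) (ρ (i + 1))) :
    ∃ n, ρ n ∈ X.F := by
  by_contra! h
  have hout : X.out σ₁ (X.follow ρ) s = ρ :=
    funext fun k => X.out_follow h0 (fun i _ => hmove i) k le_rfl
  exact htop (X.cost_eq_top h ▸ hout ▸ hwin (X.follow ρ))

/-- A chain of live prolongations converges to a `σ₁`-consistent play avoiding `F`. -/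
lemma wellFounded_liveExt (hwin : ∀ σ₂ : X.Strat2, X.cost (X.out σ₁ σ₂ s) ∈ S)
    (htop : ⊤ ∉ S) : WellFounded (X.LiveExt σ₁ s) := by
  refine wellFounded_iff_isEmpty_descending_chain.2 ⟨fun ⟨f, hf⟩ => ?_⟩
  have hmono : Monotone f := monotone_nat_of_le_succ fun n => (hf n).1
  have hlen : ∀ n, n ≤ (f n).len :=
    (strictMono_nat_of_lt_succ (f := fun n => (f n).len) fun n => (hf n).2.1).id_le
  have hlimit : ∀ i n, i ≤ n → (f n).path i = (f i).path i := fun i n hin =>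
    (hmono hin).path_eq (hlen i)
  have hrun : ∀ i, X.IsRun σ₁ s (f (i + 1)) := fun i => (hf i).2.2.1
  obtain ⟨n, hn⟩ := exists_mem_F_of_isMove (ρ := fun i => (f i).path i) hwin htop
    ((hlimit 0 1 zero_le_one).symm.trans (hrun 0).1) fun i => by
      have hmove := ((hrun i).2 i (hlen (i + 1))).1
      rwa [List.map_congr_left fun k hk => hlimit k (i + 1) (by rw [List.mem_range] at hk; omega),
        hlimit i (i + 1) (by omega)] at hmove
  exact ((hrun n).2 n (hlen (n + 1))).2 (hlimit n (n + 1) n.le_succ ▸ hn)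

lemma not_loopExt_maxLoopExt (hwin : ∀ σ₂ : X.Strat2, X.cost (X.out σ₁ σ₂ s) ∈ S) (htop : ⊤ ∉ S)
    (p q : PlayPrefix W) : ¬ X.LoopExt σ₁ s q (X.maxLoopExt σ₁ s p) := by
  obtain ⟨r, hr, hmin⟩ := (wellFounded_liveExt hwin htop).has_min
    {q | q = p ∨ X.LoopExt σ₁ s q p} ⟨p, Or.inl rfl⟩
  have h : ∃ r, (r = p ∨ X.LoopExt σ₁ s r p) ∧ ∀ q', ¬ X.LoopExt σ₁ s q' r :=
    ⟨r, hr, fun q' hq' => hmin q' (Or.inr (hq'.trans hr)) hq'.1⟩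
  rw [maxLoopExt, dif_pos h]
  exact h.choose_spec.2 q

end Winning

section Play

variable (σ₁ s)
variable (σ₂ : X.Strat2)

noncomputable def virtualHistAlong (n : ℕ) : PlayPrefix W :=
  X.virtualHist σ₁ s ((List.range (n + 1)).map (X.out (X.shortcut σ₁ s) σ₂ s))

variable {σ₁ s}

lemma virtualHistAlong_zero : X.virtualHistAlong σ₁ s σ₂ 0 = X.maxLoopExt σ₁ s ⟨fun _ => s, 0⟩ := by
  simp [virtualHistAlong, virtualHist]

lemma virtualHistAlong_succ (n : ℕ) :
    X.virtualHistAlong σ₁ s σ₂ (n + 1) =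
      X.maxLoopExt σ₁ s
        ((X.virtualHistAlong σ₁ s σ₂ n).snoc (X.out (X.shortcut σ₁ s) σ₂ s (n + 1))) := by
  rw [virtualHistAlong, List.range_succ, List.map_append, virtualHist,
    List.tail_append_of_ne_nil (by simp), List.map_singleton, List.foldl_concat]
  rfl

lemma last_virtualHistAlong (n : ℕ) :
    (X.virtualHistAlong σ₁ s σ₂ n).last = X.out (X.shortcut σ₁ s) σ₂ s n := by
  cases n with
  | zero => rw [virtualHistAlong_zero, last_maxLoopExt]; rfl
  | succ n => rw [virtualHistAlong_succ, last_maxLoopExt, PlayPrefix.last_snoc]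

lemma isMove_virtualHistAlong (n : ℕ) :
    X.IsMove σ₁ (X.virtualHistAlong σ₁ s σ₂ n).past (X.virtualHistAlong σ₁ s σ₂ n).last
      (X.out (X.shortcut σ₁ s) σ₂ s (n + 1)) := by
  have h := X.isMove_out (X.shortcut σ₁ s) σ₂ s n
  rw [last_virtualHistAlong]
  refine ⟨h.1, fun hv => (h.2 hv).trans ?_⟩
  simp only [shortcut, virtualHistAlong, List.range_succ, List.map_append, List.map_singleton]

lemma monotone_virtualHistAlong : Monotone (X.virtualHistAlong σ₁ s σ₂) :=
  monotone_nat_of_le_succ fun n => by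
    rw [virtualHistAlong_succ]
    exact (PlayPrefix.le_snoc _ _).trans (le_maxLoopExt _)

lemma strictMono_len_virtualHistAlong : StrictMono fun n => (X.virtualHistAlong σ₁ s σ₂ n).len :=
  strictMono_nat_of_lt_succ fun n => by
    rw [virtualHistAlong_succ]
    exact lt_of_lt_of_le (Nat.lt_succ_self _)
      (le_maxLoopExt ((X.virtualHistAlong σ₁ s σ₂ n).snoc (X.out (X.shortcut σ₁ s) σ₂ s (n + 1)))).1

lemma weightSum_le_virtualHistAlong (n : ℕ) :
    X.weightSum (X.out (X.shortcut σ₁ s) σ₂ s) n ≤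
      X.weightSum (X.virtualHistAlong σ₁ s σ₂ n).path (X.virtualHistAlong σ₁ s σ₂ n).len := by
  induction n with
  | zero => exact fun j => by simp [weightSum]
  | succ n ih =>
    rw [virtualHistAlong_succ]
    refine le_trans ?_ (X.weightSum_mono (le_maxLoopExt _))
    rw [weightSum_snoc, weightSum_succ, last_virtualHistAlong]
    exact add_le_add ih le_rfl

lemma isRun_virtualHistAlong {n : ℕ} (hF : ∀ k < n, X.out (X.shortcut σ₁ s) σ₂ s k ∉ X.F) :
    X.IsRun σ₁ s (X.virtualHistAlong σ₁ s σ₂ n) := by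
  induction n with
  | zero =>
    rw [virtualHistAlong_zero]
    exact IsRun.maxLoopExt ⟨rfl, fun i hi => absurd hi (Nat.not_lt_zero i)⟩
  | succ n ih =>
    rw [virtualHistAlong_succ]
    refine (IsRun.snoc (ih fun k hk => hF k (by omega)) ?_
      (X.isMove_virtualHistAlong σ₂ n)).maxLoopExt
    rw [last_virtualHistAlong]
    exact hF n (Nat.lt_succ_self n)

lemma not_loopExt_virtualHistAlong {S : Set (CostP d)}
    (hwin : ∀ σ₂ : X.Strat2, X.cost (X.out σ₁ σ₂ s) ∈ S) (htop : ⊤ ∉ S) (n : ℕ)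
    (q : PlayPrefix W) : ¬ X.LoopExt σ₁ s q (X.virtualHistAlong σ₁ s σ₂ n) := by
  cases n with
  | zero => rw [virtualHistAlong_zero]; exact not_loopExt_maxLoopExt hwin htop _ q
  | succ n => rw [virtualHistAlong_succ]; exact not_loopExt_maxLoopExt hwin htop _ q

end Play

end Shortcut

theorem exists_strat1_injOn_of_isLowerSet {σ₁ : X.Strat1} {s : W} {S : Set (CostP d)}
    (hS : IsLowerSet S) (htop : ⊤ ∉ S) (hwin : ∀ σ₂ : X.Strat2, X.cost (X.out σ₁ σ₂ s) ∈ S) :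
    ∃ σ₁' : X.Strat1, ∀ σ₂ : X.Strat2, ∃ h : ∃ l, X.out σ₁' σ₂ s l ∈ X.F,
      X.cost (X.out σ₁' σ₂ s) ∈ S ∧ Set.InjOn (X.out σ₁' σ₂ s) (Set.Iic (Nat.find h)) := by
  refine ⟨X.shortcut σ₁ s, fun σ₂ => ?_⟩
  have hmono : Monotone (X.virtualHistAlong σ₁ s σ₂) := X.monotone_virtualHistAlong σ₂
  have hlen : StrictMono fun n => (X.virtualHistAlong σ₁ s σ₂ n).len :=
    X.strictMono_len_virtualHistAlong σ₂
  have hreach : ∃ l, X.out (X.shortcut σ₁ s) σ₂ s l ∈ X.F := by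
    by_contra! h
    exact (wellFounded_iff_isEmpty_descending_chain.1 (wellFounded_liveExt hwin htop)).false
      ⟨X.virtualHistAlong σ₁ s σ₂, fun n => ⟨hmono n.le_succ, hlen n.lt_succ_self,
        X.isRun_virtualHistAlong σ₂ fun k _ => h k, by rw [last_virtualHistAlong]; exact h _⟩⟩
  have hbefore : ∀ k < Nat.find hreach, X.out (X.shortcut σ₁ s) σ₂ s k ∉ X.F :=
    fun k hk => Nat.find_min hreach hk
  refine ⟨hreach, ?_, ?_⟩
  · rw [X.cost_eq_weightSum (Nat.find_spec hreach) hbefore]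
    refine hS (X.weightSum_le_virtualHistAlong σ₂ _)
      (weightSum_mem_of_isRun hwin (X.isRun_virtualHistAlong σ₂ hbefore) ?_)
    rw [last_virtualHistAlong]
    exact Nat.find_spec hreach
  · -- a repetition `m < n` would make the virtual history at `n` a loop prolonging the one at `m`
    have hne : ∀ m n, m < n → n ≤ Nat.find hreach →
        X.out (X.shortcut σ₁ s) σ₂ s m ≠ X.out (X.shortcut σ₁ s) σ₂ s n := by
      intro m n hmn hn heq
      have hrun := X.isRun_virtualHistAlong σ₂ fun k (hk : k < n) => hbefore k (by omega)
      refine X.not_loopExt_virtualHistAlong σ₂ hwin htop m _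
        ⟨⟨hmono hmn.le, hlen hmn, hrun, ?_⟩, ?_⟩
      · rw [last_virtualHistAlong, ← heq]
        exact hbefore m (by omega)
      · rw [last_virtualHistAlong, last_virtualHistAlong, heq]
    intro m hm n hn heq
    rcases lt_trichotomy m n with h | h | h
    · exact absurd heq (hne m n h hn)
    · exact h
    · exact absurd heq.symm (hne n m h hm)

end MWGame

theorem succ_le_two_mul_card_of_injOn {α β : Type*} [Fintype α] {ρ : ℕ → α ⊕ β} {L : ℕ}
    (h0 : (ρ 0).isLeft) (hstep : ∀ k, ¬ (ρ k).isLeft → (ρ (k + 1)).isLeft)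
    (hinj : Set.InjOn ρ (Set.Iic L)) : L + 1 ≤ 2 * Fintype.card α := by
  set T := (Finset.range (L + 1)).filter fun k => (ρ k).isLeft
  set R := (Finset.range (L + 1)).filter fun k => ¬ (ρ k).isLeft
  have hTR : T.card + R.card = L + 1 := by
    rw [Finset.card_filter_add_card_filter_not, Finset.card_range]
  have hT : T.card ≤ Fintype.card α := by
    refine (Finset.card_le_card_of_injOn ρ (t := Finset.univ.map .inl) (fun k hk => ?_)
      (hinj.mono fun k hk => ?_)).trans (by simp)
    · obtain ⟨a, ha⟩ := Sum.isLeft_iff.1 (Finset.mem_filter.1 hk).2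
      simp [ha]
    · exact Nat.lt_succ_iff.1 (Finset.mem_range.1 (Finset.mem_filter.1 hk).1)
  -- every right vertex is entered from a left vertex
  have hR : R.card ≤ T.card := by
    have hpos : ∀ k ∈ R, k ≠ 0 := fun k hk h => (Finset.mem_filter.1 hk).2 (h ▸ h0)
    refine Finset.card_le_card_of_injOn (· - 1) (fun k hk => ?_) (fun k hk k' hk' h => ?_)
    · obtain ⟨hkL, hright⟩ := Finset.mem_filter.1 hk
      rw [Finset.mem_range] at hkL
      refine Finset.mem_filter.2 ⟨Finset.mem_range.2 (by dsimp only; omega), ?_⟩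
      by_contra hleft
      have := hstep (k - 1) hleft
      rw [Nat.sub_add_cancel (Nat.pos_of_ne_zero (hpos k hk))] at this
      exact hright this
    · have := hpos k hk
      have := hpos k' hk'
      simp only at h
      omega
  omega

lemma QRGame.isLeft_of_extGame_E {V : Type*} [Fintype V] (G : QRGame V) (swap : Bool)
    {a b : G.XV} (hE : (G.extGame swap).E a b) (ha : ¬ a.isLeft) : b.isLeft := by
  rcases a with a | q
  · exact absurd rfl ha
  rcases b with b | q'
  · rfl
  · exact hE.elim

/-- In the extended game (`X_CP` or `X_PC`) of a quantitative
reachability game with penalties, if Player 1 has a strategy from `v^X` ensuring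
`(x,y)` (w.r.t. `≤_C` or `≤_L`), then he has one that moreover guarantees that the
target set of the extended game is reached within `2·|V|` steps. -/
theorem stmt19 {V : Type*} [Fintype V] (G : QRGame V) (swap : Bool)
    (le : CostP 2 → CostP 2 → Prop) (hle : le = leC ∨ le = leL)
    (v : V) (x y : ℕ)
    (hex : ∃ σ₁ : (G.extGame swap).Strat1, ∀ σ₂ : (G.extGame swap).Strat2,
      le ((G.extGame swap).cost ((G.extGame swap).out σ₁ σ₂ (Sum.inl v)))
        (pair2 x y)) :
    ∃ σ₁' : (G.extGame swap).Strat1, ∀ σ₂ : (G.extGame swap).Strat2,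
      le ((G.extGame swap).cost ((G.extGame swap).out σ₁' σ₂ (Sum.inl v)))
        (pair2 x y) ∧
      ∃ h : (∃ l, (G.extGame swap).out σ₁' σ₂ (Sum.inl v) l ∈ (G.extGame swap).F),
        Nat.find h ≤ 2 * Fintype.card V := by
  obtain ⟨σ₁, hσ₁⟩ := hex
  obtain ⟨σ₁', hσ₁'⟩ := (G.extGame swap).exists_strat1_injOn_of_isLowerSet
    (isLowerSet_setOf_le hle (pair2 x y)) (fun h => pair2_ne_top x y (eq_top_of_top_le hle h)) hσ₁
  refine ⟨σ₁', fun σ₂ => ?_⟩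
  obtain ⟨hreach, hcost, hinj⟩ := hσ₁' σ₂
  refine ⟨hcost, hreach, ?_⟩
  have := succ_le_two_mul_card_of_injOn rfl
    (fun k => G.isLeft_of_extGame_E swap ((G.extGame swap).isMove_out σ₁' σ₂ _ k).1) hinj
  omega
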